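/- Let f:[0,1] → ℝ be absolutely continuous with f(0) = f(1) = 0 and |f'| equal to a constant c a.e. Then, with J(f) defined as the infimum of (4/3)∫_0^1 (w'(s) + f'(s)²)^{3/2} ds over absolutely continuous w with w(0) = 0 satisfying w(t) - w(s) ≥ -(f(t)-f(s))²/(t-s) for all 0 ≤ s < t ≤ 1, we have J(f) = (4/3)∫_0^1 |f'(t)|³ dt = (4/3)c³. -/

import Mathlib

/-! The weight `w = 0` is admissible, which gives `J(f) ≤ (4/3)∫|f'|³`. Conversely, for any
admissible `w` the constraint at `(s, t) = (0, 1)` gives `∫ w' = w(1) ≥ 0`, so by Jensen's inequality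
for `x ↦ x^{3/2}` the cost of `w` is at least `(4/3)(∫ f'²)^{3/2}`. When `|f'| ≡ c` both bounds
equal `(4/3)c³`. -/

open MeasureTheory

/-- The variational rate function for the directed geodesic: the infimum of
`(4/3)∫_0^1 (w' + (f')²)^{3/2}` over absolutely continuous weight functions `w`
with `w(0)=0` satisfying `w(t)-w(s) ≥ -(f(t)-f(s))²/(t-s)`. -/
noncomputable def geoRate (f f' : ℝ → ℝ) : ENNReal :=
  sInf {I : ENNReal | ∃ w w' : ℝ → ℝ, w 0 = 0 ∧
    IntegrableOn w' (Set.Icc (0:ℝ) 1) ∧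
    (∀ s t : ℝ, 0 ≤ s → s ≤ t → t ≤ 1 → w t - w s = ∫ u in s..t, w' u) ∧
    (∀ s t : ℝ, 0 ≤ s → s < t → t ≤ 1 →
      -(f t - f s)^2 / (t - s) ≤ w t - w s) ∧
    I = (4/3 : ENNReal) * ∫⁻ t in Set.Ioc (0:ℝ) 1,
      ENNReal.ofReal (w' t + (f' t)^2) ^ ((3:ℝ)/2)}

open Set ENNReal

theorem ofReal_integral_le_lintegral_ofReal {α : Type*} [MeasurableSpace α] {μ : Measure α}
    {g : α → ℝ} (hg : Integrable g μ) :
    ENNReal.ofReal (∫ a, g a ∂μ) ≤ ∫⁻ a, ENNReal.ofReal (g a) ∂μ :=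
  calc ENNReal.ofReal (∫ a, g a ∂μ)
      = ENNReal.ofReal ((∫⁻ a, .ofReal (g a) ∂μ).toReal - (∫⁻ a, .ofReal (-g a) ∂μ).toReal) := by
        rw [integral_eq_lintegral_pos_part_sub_lintegral_neg_part hg]
    _ ≤ ENNReal.ofReal (∫⁻ a, .ofReal (g a) ∂μ).toReal :=
        ENNReal.ofReal_le_ofReal (sub_le_self _ ENNReal.toReal_nonneg)
    _ ≤ ∫⁻ a, ENNReal.ofReal (g a) ∂μ := ENNReal.ofReal_toReal_le

theorem rpow_lintegral_le_lintegral_rpow {α : Type*} [MeasurableSpace α] {μ : Measure α}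
    [IsProbabilityMeasure μ] {g : α → ℝ≥0∞} (hg : AEMeasurable g μ) {p : ℝ} (hp : 1 ≤ p) :
    (∫⁻ a, g a ∂μ) ^ p ≤ ∫⁻ a, g a ^ p ∂μ := by
  have hL1_le_Lp := eLpNorm'_le_eLpNorm'_of_exponent_le one_pos hp μ hg.aestronglyMeasurable
  simp only [eLpNorm'_eq_lintegral_enorm, enorm_eq_self, ENNReal.rpow_one, div_one] at hL1_le_Lp
  calc (∫⁻ a, g a ∂μ) ^ p ≤ ((∫⁻ a, g a ^ p ∂μ) ^ (1 / p)) ^ p := by gcongr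
    _ = ∫⁻ a, g a ^ p ∂μ := by
        rw [← ENNReal.rpow_mul, one_div_mul_cancel (by positivity), ENNReal.rpow_one]

theorem ofReal_sq_rpow_three_halves (x : ℝ) :
    ENNReal.ofReal (x ^ 2) ^ ((3 : ℝ) / 2) = ENNReal.ofReal (|x| ^ 3) := by
  rw [ENNReal.ofReal_rpow_of_nonneg (sq_nonneg x) (by norm_num), ← sq_abs,
    ← Real.rpow_natCast, ← Real.rpow_mul (abs_nonneg x)]
  norm_num

theorem geoRate_le (f f' : ℝ → ℝ) :
    geoRate f f' ≤ 4 / 3 * ∫⁻ t in Ioc (0 : ℝ) 1, ENNReal.ofReal (|f' t| ^ 3) := by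
  refine sInf_le ⟨fun _ => 0, fun _ => 0, rfl, integrableOn_zero, by simp, ?_, ?_⟩
  · intro s t _ hst _
    simpa using div_nonpos_of_nonpos_of_nonneg (neg_nonpos.2 (sq_nonneg (f t - f s)))
      (sub_nonneg.2 hst.le)
  · simp only [zero_add, ofReal_sq_rpow_three_halves]

theorem le_geoRate {f f' : ℝ → ℝ} (hf : f 0 = f 1)
    (hf' : IntegrableOn (fun t => f' t ^ 2) (Ioc (0 : ℝ) 1)) :
    4 / 3 * ENNReal.ofReal (∫ t in Ioc (0 : ℝ) 1, f' t ^ 2) ^ ((3 : ℝ) / 2) ≤ geoRate f f' := by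
  have : IsProbabilityMeasure (volume.restrict (Ioc (0 : ℝ) 1)) := ⟨by simp⟩
  refine le_sInf ?_
  rintro I ⟨w, w', hw0, hw', hw_ftc, hw_adm, rfl⟩
  have hw'_Ioc : IntegrableOn w' (Ioc (0 : ℝ) 1) := hw'.mono_set Ioc_subset_Icc_self
  have hw1 : 0 ≤ w 1 := by simpa [hf, hw0] using hw_adm 0 1 le_rfl one_pos le_rfl
  have hw'_integral : ∫ t in Ioc (0 : ℝ) 1, w' t = w 1 := by
    rw [← intervalIntegral.integral_of_le zero_le_one, ← hw_ftc 0 1 le_rfl zero_le_one le_rfl,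
      hw0, sub_zero]
  have hmean : ∫ t in Ioc (0 : ℝ) 1, f' t ^ 2 ≤ ∫ t in Ioc (0 : ℝ) 1, (w' t + f' t ^ 2) := by
    rw [integral_add hw'_Ioc hf', hw'_integral]
    linarith
  gcongr 4 / 3 * ?_
  calc ENNReal.ofReal (∫ t in Ioc (0 : ℝ) 1, f' t ^ 2) ^ ((3 : ℝ) / 2)
      ≤ (∫⁻ t in Ioc (0 : ℝ) 1, ENNReal.ofReal (w' t + f' t ^ 2)) ^ ((3 : ℝ) / 2) := by
        gcongr
        exact (ENNReal.ofReal_le_ofReal hmean).trans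
          (ofReal_integral_le_lintegral_ofReal (hw'_Ioc.add hf'))
    _ ≤ ∫⁻ t in Ioc (0 : ℝ) 1, ENNReal.ofReal (w' t + f' t ^ 2) ^ ((3 : ℝ) / 2) :=
        rpow_lintegral_le_lintegral_rpow (hw'_Ioc.add hf').aemeasurable.ennreal_ofReal
          (by norm_num)

theorem geoRate_constant_slope_general (f f' : ℝ → ℝ) (c : ℝ) (hc : 0 ≤ c)
    (hf0 : f 0 = 0) (hf1 : f 1 = 0)
    (hconst : ∀ᵐ t ∂(volume.restrict (Set.Ioc (0:ℝ) 1)), |f' t| = c) :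
    geoRate f f' =
      (4/3 : ENNReal) * ∫⁻ t in Set.Ioc (0:ℝ) 1, ENNReal.ofReal (|f' t|^3) ∧
    geoRate f f' = ENNReal.ofReal ((4/3) * c^3) := by
  have hsq : (fun t => f' t ^ 2) =ᵐ[volume.restrict (Ioc (0 : ℝ) 1)] fun _ => c ^ 2 :=
    hconst.mono fun t ht => by rw [← ht, sq_abs]
  have hcube : ∫⁻ t in Ioc (0 : ℝ) 1, ENNReal.ofReal (|f' t| ^ 3) = ENNReal.ofReal (c ^ 3) := by
    rw [lintegral_congr_ae (hconst.mono fun t ht => by rw [ht])]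
    simp
  have hcost : 4 / 3 * ENNReal.ofReal (c ^ 3) = ENNReal.ofReal (4 / 3 * c ^ 3) := by
    rw [ENNReal.ofReal_mul (by norm_num), ENNReal.ofReal_div_of_pos (by norm_num)]
    norm_num
  have hlower : 4 / 3 * ENNReal.ofReal (c ^ 3) ≤ geoRate f f' := by
    have := le_geoRate (f := f) (f' := f') (hf0.trans hf1.symm)
      ((integrableOn_const (by simp)).congr_fun_ae hsq.symm)
    rwa [integral_congr_ae hsq, setIntegral_const, Real.volume_real_Ioc_of_le zero_le_one,
      sub_zero, one_smul, ofReal_sq_rpow_three_halves, abs_of_nonneg hc] at this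
  have hJ : geoRate f f' = 4 / 3 * ∫⁻ t in Ioc (0 : ℝ) 1, ENNReal.ofReal (|f' t| ^ 3) :=
    le_antisymm (geoRate_le f f') (by rwa [hcube])
  exact ⟨hJ, by rw [hJ, hcube, hcost]⟩

/-- If `|f'| ≡ c` a.e. on `[0,1]` and `f(0)=f(1)=0`, then
`J(f) = (4/3)∫_0^1 |f'|³ = (4/3)c³`. -/
theorem geoRate_constant_slope (f f' : ℝ → ℝ) (c : ℝ) (hc : 0 ≤ c)
    (hf0 : f 0 = 0) (hf1 : f 1 = 0)
    (hfint : IntegrableOn f' (Set.Icc (0:ℝ) 1))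
    (hfftc : ∀ s t : ℝ, 0 ≤ s → s ≤ t → t ≤ 1 → f t - f s = ∫ u in s..t, f' u)
    (hconst : ∀ᵐ t ∂(volume.restrict (Set.Ioc (0:ℝ) 1)), |f' t| = c) :
    geoRate f f' =
      (4/3 : ENNReal) * ∫⁻ t in Set.Ioc (0:ℝ) 1, ENNReal.ofReal (|f' t|^3) ∧
    geoRate f f' = ENNReal.ofReal ((4/3) * c^3) :=
  geoRate_constant_slope_general f f' c hc hf0 hf1 hconst
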